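/- Let P have length m, T have length n ≤ 3m/2, and let Q have length q. Set d := δ_H(P,Q*) and d' := δ_H(T,Q*). Then the sequence h_j := δ_H(T[jq..jq+m), P), for 0 ≤ j ≤ (n−m)/q, contains at most d'(2d+1) indices j with h_j ≠ h_{j+1}, and, provided d > 0, at most 2d' indices j with h_j ≤ d/2. -/

import Mathlib

open List

variable {α : Type*}

/-- The fragment S[i..j) of a string (list) S. -/
def frag (S : List α) (i j : ℕ) : List α := (S.drop i).take (j - i)

/-- Q^∞[a..b): the fragment of the infinite repetition of Q from a (incl.) to b (excl.). -/
def repPrefix [Inhabited α] (Q : List α) (a b : ℕ) : List α :=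
  (List.range' a (b - a)).map (fun i => Q.getD (i % Q.length) default)

/-- Hamming distance of two strings of the same length (counted over positions of S). -/
def hamming [DecidableEq α] [Inhabited α] (S T : List α) : ℕ :=
  ((Finset.range S.length).filter
    (fun i => S.getD i default ≠ T.getD i default)).card

/-- δ_H(S, Q*): Hamming distance of S to the length-|S| prefix of Q^∞. -/
def hammingStar [DecidableEq α] [Inhabited α] (S Q : List α) : ℕ :=
  hamming S (repPrefix Q 0 S.length)

/-- Cost structure for edit distance (re-created: removed from Mathlib). -/
structure Levenshtein.Cost (α β δ : Type*) where
  delete : α → δ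
  insert : β → δ
  substitute : α → β → δ

/-- Unit costs, as in the former Mathlib `Levenshtein.defaultCost`. -/
def Levenshtein.defaultCost {α : Type*} [DecidableEq α] : Levenshtein.Cost α α ℕ where
  delete _ := 1
  insert _ := 1
  substitute a b := if a = b then 0 else 1

/-- Levenshtein distance with cost `C`, by the recursion the former Mathlib `levenshtein` satisfied. -/
def levenshtein {α β : Type*} (C : Levenshtein.Cost α β ℕ) : List α → List β → ℕ
  | [], [] => 0
  | x :: xs, [] => C.delete x + levenshtein C xs []
  | [], y :: ys => C.insert y + levenshtein C [] ys
  | x :: xs, y :: ys =>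
      min (C.delete x + levenshtein C xs (y :: ys))
        (min (C.insert y + levenshtein C (x :: xs) ys) (C.substitute x y + levenshtein C xs ys))
termination_by xs ys => xs.length + ys.length

/-- Edit (Levenshtein) distance. -/
def editDist [DecidableEq α] (S T : List α) : ℕ :=
  levenshtein Levenshtein.defaultCost S T

/-- A string is primitive if it is nonempty and not a proper power of a string. -/
def Primitive (Q : List α) : Prop :=
  Q ≠ [] ∧ ∀ (U : List α) (t : ℕ), 2 ≤ t → Q ≠ (List.replicate t U).flatten

/-- p is a period of S. -/
def IsPeriod [Inhabited α] (p : ℕ) (S : List α) : Prop :=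
  0 < p ∧ ∀ i, i + p < S.length → S.getD i default = S.getD (i + p) default

/-- per(S): the smallest period of S. -/
noncomputable def per [Inhabited α] (S : List α) : ℕ := sInf {p | IsPeriod p S}

/-- Occ^H_k(P,T): starting positions of k-mismatch occurrences of P in T. -/
def occH [DecidableEq α] [Inhabited α] (k : ℕ) (P T : List α) : Finset ℕ :=
  (Finset.range (T.length - P.length + 1)).filter
    (fun i => hamming P (frag T i (i + P.length)) ≤ k)

/-- Exact occurrences of B in T. -/
def occExact [DecidableEq α] (B T : List α) : Finset ℕ :=
  (Finset.range (T.length + 1)).filter (fun i => frag T i (i + B.length) = B)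

/-- Occ^E_k(P,T): starting positions of k-error (edit distance) occurrences of P in T. -/
def occE [DecidableEq α] (k : ℕ) (P T : List α) : Set ℕ :=
  {i | ∃ j, i ≤ j ∧ j ≤ T.length ∧ editDist P (frag T i j) ≤ k}

/-- δ_E^cyc(S,Q): minimum edit distance of S to any substring of Q^∞. -/
noncomputable def edCyc [DecidableEq α] [Inhabited α] (S Q : List α) : ℕ :=
  sInf {d | ∃ i j, i ≤ j ∧ d = editDist S (repPrefix Q i j)}

/-- δ_E(S,Q*): minimum edit distance of S to a prefix of Q^∞. -/
noncomputable def edStar [DecidableEq α] [Inhabited α] (S Q : List α) : ℕ :=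
  sInf {d | ∃ j, d = editDist S (repPrefix Q 0 j)}

/-- Minimum edit distance of T to a substring of Q^∞ starting at position x. -/
noncomputable def edStarAt [DecidableEq α] [Inhabited α] (T Q : List α) (x : ℕ) : ℕ :=
  sInf {d | ∃ j, x ≤ j ∧ d = editDist T (repPrefix Q x j)}

/-- Minimum edit distance of T to a substring of Q^∞ ending at a position ≡ y (mod |Q|). -/
noncomputable def edEndAt [DecidableEq α] [Inhabited α] (T Q : List α) (y : ℕ) : ℕ :=
  sInf {d | ∃ i j, i ≤ j ∧ j % Q.length = y % Q.length ∧ d = editDist T (repPrefix Q i j)}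

/-- Minimum edit distance of L to a substring of Q^∞ ending at a multiple of |Q|. -/
noncomputable def edEndMul [DecidableEq α] [Inhabited α] (L Q : List α) : ℕ :=
  sInf {d | ∃ i j, i ≤ j * Q.length ∧ d = editDist L (repPrefix Q i (j * Q.length))}

/-- The fragment S[i..j) of S is locked with respect to Q. -/
def Locked [DecidableEq α] [Inhabited α] (S Q : List α) (i j : ℕ) : Prop :=
  (∃ a : ℕ, edCyc (frag S i j) Q = editDist (frag S i j) (repPrefix Q 0 (a * Q.length))) ∨
  (j = S.length ∧ edCyc (frag S i j) Q = edStar (frag S i j) Q) ∨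
  (i = 0 ∧ edCyc (frag S i j) Q = edEndMul (frag S i j) Q) ∨
  (i = 0 ∧ j = S.length)

/-- rot^j(Q): rotation moving the last j (mod |Q|) characters to the front. -/
def rotR (Q : List α) (j : ℕ) : List α := Q.rotate (Q.length - j % Q.length)

/-- |Mis(T,Q*) ∩ [a,b)|. -/
def misCount [DecidableEq α] [Inhabited α] (T Q : List α) (a b : ℕ) : ℕ :=
  ((Finset.Ico a b).filter (fun i => i < T.length ∧
     T.getD i default ≠ Q.getD (i % Q.length) default)).card

/-- μ_j: the total weight of aligned mismatch pairs of P and T against Q^∞ at shift j·|Q|: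
a pair (τ = j|Q|+π, π) with π ∈ Mis(P,Q*), τ ∈ Mis(T,Q*) has weight 2 − δ_H(P[π],T[τ]). -/
def mu [DecidableEq α] [Inhabited α] (P T Q : List α) (j : ℕ) : ℕ :=
  ∑ π ∈ Finset.range P.length,
    if P.getD π default ≠ Q.getD (π % Q.length) default ∧
       j * Q.length + π < T.length ∧
       T.getD (j * Q.length + π) default ≠ Q.getD ((j * Q.length + π) % Q.length) default
    then (if P.getD π default = T.getD (j * Q.length + π) default then 2 else 1)
    else 0

/-! Position by position, comparing `P[π]`, `T[jq+π]` and `Q[π mod q]` gives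
`d + |Mis(T,Q*) ∩ [jq, jq+m)| = h_j + μ_j`, where `μ_j` is at most twice the number of
mismatches of `P` against `Q*` lying over mismatches of `T` against `Q*` at shift `jq`. Each of the `d·d'`
pairs of mismatches is aligned at no more than one shift, so `∑ μ_j ≤ 2dd'` and `μ_j ≠ 0` for at
most `dd'` shifts. Since `n - m ≤ m`, the window count `|Mis(T,Q*) ∩ [jq, jq+m)|` changes at most
`d'` times, and `h_j` changes only where that count changes or `μ_j`, `μ_{j+1}` are nonzero.
Finally `2h_j ≤ d` forces `μ_j ≥ d`, and summing gives the second bound. -/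

open Finset

section SlidingWindow

theorem card_filter_mul_add_mem_le (M s : Finset ℕ) {p : ℕ} (hp : 0 < p) (r : ℕ) :
    #(s.filter fun j => j * p + r ∈ M) ≤ #M :=
  card_le_card_of_injOn (fun j => j * p + r) (fun _ hj => (Finset.mem_filter.mp hj).2)
    fun _ _ _ _ hab => Nat.eq_of_mul_eq_mul_right hp (Nat.add_right_cancel hab)

theorem card_filter_window_card_ne_succ_le (M : Finset ℕ) {p m K : ℕ} (hKm : K * p ≤ m) :
    #((Finset.range K).filter fun j =>
        #((Finset.Ico (j * p) (j * p + m)).filter (· ∈ M)) ≠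
          #((Finset.Ico ((j + 1) * p) ((j + 1) * p + m)).filter (· ∈ M))) ≤ #M := by
  -- `τ` lies in the block `[jp, (j+1)p)` or `m + [jp, (j+1)p)` of exactly one `j < K`
  let block : ℕ → ℕ := fun τ => if τ < m then τ / p else (τ - m) / p
  refine (card_le_card fun j hj => ?_).trans (card_image_le (s := M) (f := block))
  obtain ⟨hjK, hne⟩ := Finset.mem_filter.mp hj
  have hjm : (j + 1) * p ≤ m := (Nat.mul_le_mul_right p (Finset.mem_range.mp hjK)).trans hKm
  obtain ⟨τ, hτ⟩ : ∃ τ, ¬(τ ∈ (Finset.Ico (j * p) (j * p + m)).filter (· ∈ M) ↔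
      τ ∈ (Finset.Ico ((j + 1) * p) ((j + 1) * p + m)).filter (· ∈ M)) := by
    by_contra! h
    exact hne (congrArg card (Finset.ext h))
  simp only [Finset.mem_filter, Finset.mem_Ico] at hτ
  have hτM : τ ∈ M := by tauto
  simp only [hτM, and_true] at hτ
  have hsucc : (j + 1) * p = j * p + p := by ring
  refine Finset.mem_image.mpr ⟨τ, hτM, ?_⟩
  simp only [block]
  split_ifs <;> exact Nat.div_eq_of_lt_le (by omega) (by omega)

end SlidingWindow

theorem mismatch_add_mismatch [DecidableEq α] (x y z : α) :
    (if x ≠ z then 1 else 0) + (if y ≠ z then 1 else 0) =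
      (if y ≠ x then 1 else 0) + (if x ≠ z ∧ y ≠ z then (if x = y then 2 else 1) else 0) := by
  by_cases hxz : x = z <;> by_cases hyz : y = z <;> by_cases hxy : x = y <;> simp_all [eq_comm]

section Mismatches

variable [DecidableEq α] [Inhabited α]

/-- `Mis(S, Q*)` in the paper. -/
def misSet (S Q : List α) : Finset ℕ :=
  (Finset.range S.length).filter fun i => S.getD i default ≠ Q.getD (i % Q.length) default

theorem card_misSet (S Q : List α) : #(misSet S Q) = hammingStar S Q := by
  simp only [misSet, hammingStar, hamming]
  refine congrArg card (Finset.filter_congr fun i hi => ?_)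
  simp [repPrefix, List.getD, Finset.mem_range.mp hi]

theorem misCount_eq_card_filter_mem_misSet (T Q : List α) (a b : ℕ) :
    misCount T Q a b = #((Finset.Ico a b).filter (· ∈ misSet T Q)) := by
  simp only [misCount, misSet, Finset.mem_filter, Finset.mem_range]

theorem card_filter_misCount_ne_succ_le (T Q : List α) {p m K : ℕ} (hKm : K * p ≤ m) :
    #((Finset.range K).filter fun j =>
        misCount T Q (j * p) (j * p + m) ≠ misCount T Q ((j + 1) * p) ((j + 1) * p + m)) ≤
      hammingStar T Q := by
  simp only [misCount_eq_card_filter_mem_misSet, ← card_misSet]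
  exact card_filter_window_card_ne_succ_le (misSet T Q) hKm

theorem hammingStar_eq_sum (S Q : List α) :
    hammingStar S Q = ∑ i ∈ Finset.range S.length,
      if S.getD i default ≠ Q.getD (i % Q.length) default then 1 else 0 :=
  (card_misSet S Q).symm.trans (card_filter _ _)

theorem misCount_eq_sum (T Q : List α) (a m : ℕ) :
    misCount T Q a (a + m) = ∑ i ∈ Finset.range m,
      if a + i < T.length ∧ T.getD (a + i) default ≠ Q.getD ((a + i) % Q.length) default
      then 1 else 0 := by
  rw [misCount, card_filter, Finset.sum_Ico_eq_sum_range, Nat.add_sub_cancel_left]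

theorem hamming_frag_eq_sum (T S : List α) {a m : ℕ} (hT : a + m ≤ T.length) :
    hamming (frag T a (a + m)) S = ∑ i ∈ Finset.range m,
      if T.getD (a + i) default ≠ S.getD i default then 1 else 0 := by
  have hlen : (frag T a (a + m)).length = m := by simp [frag]; omega
  rw [hamming, card_filter, hlen]
  refine Finset.sum_congr rfl fun i hi => ?_
  have hfrag : (frag T a (a + m)).getD i default = T.getD (a + i) default := by
    simp [frag, List.getD, Finset.mem_range.mp hi, List.getElem?_drop]
  rw [hfrag]

variable (P T Q : List α)

theorem mu_le_two_mul_card_aligned (j : ℕ) :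
    mu P T Q j ≤ 2 * #((misSet P Q).filter fun π => j * Q.length + π ∈ misSet T Q) := by
  rw [card_filter, Finset.mul_sum, misSet.eq_1 P Q, Finset.sum_filter, mu]
  refine Finset.sum_le_sum fun π _ => ?_
  by_cases hmis : P.getD π default ≠ Q.getD (π % Q.length) default ∧
      j * Q.length + π < T.length ∧
      T.getD (j * Q.length + π) default ≠ Q.getD ((j * Q.length + π) % Q.length) default
  · have hτ : j * Q.length + π ∈ misSet T Q := by simpa [misSet] using hmis.2
    rw [if_pos hmis, if_pos hmis.1, if_pos hτ]
    split_ifs <;> omega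
  · rw [if_neg hmis]
    exact Nat.zero_le _

theorem card_filter_mu_ne_zero_le (hq : 0 < Q.length) (s : Finset ℕ) :
    #(s.filter fun j => mu P T Q j ≠ 0) ≤ hammingStar P Q * hammingStar T Q := by
  rw [← card_misSet, ← card_misSet]
  calc #(s.filter fun j => mu P T Q j ≠ 0)
      ≤ #((misSet P Q).biUnion fun π => s.filter fun j => j * Q.length + π ∈ misSet T Q) := by
        refine card_le_card fun j hj => ?_
        obtain ⟨hjs, hmu⟩ := Finset.mem_filter.mp hj
        obtain ⟨π, hπ⟩ :
            ((misSet P Q).filter fun π => j * Q.length + π ∈ misSet T Q).Nonempty := by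
          have := mu_le_two_mul_card_aligned P T Q j
          rw [← Finset.card_pos]
          omega
        obtain ⟨hπP, hπT⟩ := Finset.mem_filter.mp hπ
        exact Finset.mem_biUnion.mpr ⟨π, hπP, Finset.mem_filter.mpr ⟨hjs, hπT⟩⟩
    _ ≤ #(misSet P Q) * #(misSet T Q) :=
        card_biUnion_le_card_mul _ _ _ fun π _ => card_filter_mul_add_mem_le _ s hq π

theorem sum_mu_le (hq : 0 < Q.length) (s : Finset ℕ) :
    ∑ j ∈ s, mu P T Q j ≤ 2 * (hammingStar P Q * hammingStar T Q) := by
  rw [← card_misSet, ← card_misSet]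
  calc ∑ j ∈ s, mu P T Q j
      ≤ ∑ j ∈ s, 2 * #((misSet P Q).filter fun π => j * Q.length + π ∈ misSet T Q) :=
        Finset.sum_le_sum fun j _ => mu_le_two_mul_card_aligned P T Q j
    _ = 2 * ∑ π ∈ misSet P Q, #(s.filter fun j => j * Q.length + π ∈ misSet T Q) := by
        rw [← Finset.mul_sum]
        exact congrArg (2 * ·) (sum_card_bipartiteAbove_eq_sum_card_bipartiteBelow
          fun j π => j * Q.length + π ∈ misSet T Q)
    _ ≤ 2 * (#(misSet P Q) * #(misSet T Q)) := by
        gcongr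
        simpa using Finset.sum_le_card_nsmul _ _ _ fun π _ => card_filter_mul_add_mem_le _ s hq π

variable {P T Q} {m : ℕ}

theorem mu_le_two_mul_misCount (hP : P.length = m) (j : ℕ) :
    mu P T Q j ≤ 2 * misCount T Q (j * Q.length) (j * Q.length + m) := by
  rw [misCount_eq_sum, Finset.mul_sum, mu, hP]
  refine Finset.sum_le_sum fun π _ => ?_
  by_cases hmis : P.getD π default ≠ Q.getD (π % Q.length) default ∧
      j * Q.length + π < T.length ∧
      T.getD (j * Q.length + π) default ≠ Q.getD ((j * Q.length + π) % Q.length) default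
  · rw [if_pos hmis, if_pos hmis.2]
    split_ifs <;> omega
  · rw [if_neg hmis]
    exact Nat.zero_le _

theorem hammingStar_add_misCount (hP : P.length = m) {j : ℕ}
    (hj : j * Q.length + m ≤ T.length) :
    hammingStar P Q + misCount T Q (j * Q.length) (j * Q.length + m) =
      hamming (frag T (j * Q.length) (j * Q.length + m)) P + mu P T Q j := by
  rw [hammingStar_eq_sum, misCount_eq_sum, hamming_frag_eq_sum T P hj, mu, hP,
    ← Finset.sum_add_distrib, ← Finset.sum_add_distrib]
  refine Finset.sum_congr rfl fun π hπ => ?_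
  have hπT : j * Q.length + π < T.length := by have := Finset.mem_range.mp hπ; omega
  have hmod : (j * Q.length + π) % Q.length = π % Q.length := by simp
  simp only [hπT, hmod, true_and]
  exact mismatch_add_mismatch _ _ _

theorem le_mu_of_two_mul_hamming_le (hP : P.length = m) {j : ℕ}
    (hj : j * Q.length + m ≤ T.length)
    (hsmall : 2 * hamming (frag T (j * Q.length) (j * Q.length + m)) P ≤ hammingStar P Q) :
    hammingStar P Q ≤ mu P T Q j := by
  have := hammingStar_add_misCount hP hj
  have := mu_le_two_mul_misCount (T := T) (Q := Q) hP j
  omega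

end Mismatches

section Counting

variable [DecidableEq α] [Inhabited α] {P T Q : List α} {m K : ℕ}

theorem card_filter_hamming_ne_succ_le (hP : P.length = m) (hq : 0 < Q.length)
    (hKT : K * Q.length + m ≤ T.length) (hKm : K * Q.length ≤ m) :
    #((Finset.range K).filter fun j =>
        hamming (frag T (j * Q.length) (j * Q.length + m)) P ≠
        hamming (frag T ((j + 1) * Q.length) ((j + 1) * Q.length + m)) P) ≤
      hammingStar T Q * (2 * hammingStar P Q + 1) := by
  have hwin : ∀ j ≤ K, j * Q.length + m ≤ T.length := fun j hj =>
    (Nat.add_le_add_right (Nat.mul_le_mul_right _ hj) m).trans hKT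
  have hsub : ((Finset.range K).filter fun j =>
        hamming (frag T (j * Q.length) (j * Q.length + m)) P ≠
        hamming (frag T ((j + 1) * Q.length) ((j + 1) * Q.length + m)) P) ⊆
      ((Finset.range K).filter fun j => misCount T Q (j * Q.length) (j * Q.length + m) ≠
          misCount T Q ((j + 1) * Q.length) ((j + 1) * Q.length + m)) ∪
        ((Finset.range K).filter fun j => mu P T Q j ≠ 0) ∪
        ((Finset.range K).filter fun j => mu P T Q (j + 1) ≠ 0) := by
    intro j hj
    obtain ⟨hjr, hne⟩ := Finset.mem_filter.mp hj
    have hjK := Finset.mem_range.mp hjr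
    have := hammingStar_add_misCount hP (hwin j hjK.le)
    have := hammingStar_add_misCount hP (hwin (j + 1) hjK)
    simp only [Finset.mem_union, Finset.mem_filter, Finset.mem_range]
    omega
  have hshift : #((Finset.range K).filter fun j => mu P T Q (j + 1) ≠ 0) ≤
      hammingStar P Q * hammingStar T Q := by
    have := card_filter_mu_ne_zero_le P T Q hq ((Finset.range K).map (addRightEmbedding 1))
    rwa [Finset.filter_map, card_map] at this
  calc _ ≤ _ := card_le_card hsub
    _ ≤ _ := (card_union_le _ _).trans (Nat.add_le_add_right (card_union_le _ _) _)
    _ ≤ hammingStar T Q + hammingStar P Q * hammingStar T Q +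
          hammingStar P Q * hammingStar T Q :=
        add_le_add_three (card_filter_misCount_ne_succ_le T Q hKm) (card_filter_mu_ne_zero_le P T Q hq _) hshift
    _ = hammingStar T Q * (2 * hammingStar P Q + 1) := by ring

theorem card_filter_two_mul_hamming_le_le (hP : P.length = m) (hq : 0 < Q.length)
    (hKT : K * Q.length + m ≤ T.length) (hd : 0 < hammingStar P Q) :
    #((Finset.range (K + 1)).filter fun j =>
        2 * hamming (frag T (j * Q.length) (j * Q.length + m)) P ≤ hammingStar P Q) ≤
      2 * hammingStar T Q := by
  refine Nat.le_of_mul_le_mul_left ?_ hd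
  calc hammingStar P Q * #((Finset.range (K + 1)).filter fun j =>
          2 * hamming (frag T (j * Q.length) (j * Q.length + m)) P ≤ hammingStar P Q)
      = _ • hammingStar P Q := by rw [smul_eq_mul, mul_comm]
    _ ≤ ∑ j ∈ (Finset.range (K + 1)).filter fun j =>
          2 * hamming (frag T (j * Q.length) (j * Q.length + m)) P ≤ hammingStar P Q,
          mu P T Q j := by
        refine card_nsmul_le_sum _ _ _ fun j hj => ?_
        obtain ⟨hjr, hsmall⟩ := Finset.mem_filter.mp hj
        have hjK : j ≤ K := Nat.lt_succ_iff.mp (Finset.mem_range.mp hjr)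
        exact le_mu_of_two_mul_hamming_le hP
          ((Nat.add_le_add_right (Nat.mul_le_mul_right _ hjK) m).trans hKT) hsmall
    _ ≤ 2 * (hammingStar P Q * hammingStar T Q) := sum_mu_le P T Q hq _
    _ = hammingStar P Q * (2 * hammingStar T Q) := by ring

end Counting

/-- bounds on the number of changes and of small values in the sequence h_j. -/
theorem hj_changes_bound {α : Type*} [DecidableEq α] [Inhabited α]
    (P T Q : List α) (m n : ℕ)
    (hP : P.length = m) (hT : T.length = n) (hq : Q ≠ [])
    (hmn : m ≤ n) (hn : 2 * n ≤ 3 * m) :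
    ((Finset.range ((n - m) / Q.length)).filter (fun j =>
        hamming (frag T (j * Q.length) (j * Q.length + m)) P ≠
        hamming (frag T ((j + 1) * Q.length) ((j + 1) * Q.length + m)) P)).card
      ≤ hammingStar T Q * (2 * hammingStar P Q + 1) ∧
    (0 < hammingStar P Q →
      ((Finset.range ((n - m) / Q.length + 1)).filter (fun j =>
          2 * hamming (frag T (j * Q.length) (j * Q.length + m)) P ≤ hammingStar P Q)).card
        ≤ 2 * hammingStar T Q) := by
  have hq : 0 < Q.length := List.length_pos_iff.mpr hq
  have hK : (n - m) / Q.length * Q.length ≤ n - m := Nat.div_mul_le_self _ _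
  exact ⟨card_filter_hamming_ne_succ_le hP hq (by omega) (by omega),
    fun hd => card_filter_two_mul_hamming_le_le hP hq (by omega) hd⟩
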